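/- arXiv:2512.04789 — 2 statements merged into one kernel-verified Lean document; each statement's English description precedes it below -/
import Mathlib

section
/- Let φ be an alternating m-form on ℝ^n, let g₁, g₂ be two inner products on ℝ^n, and let c₁, c₂ ≥ 0 be constants such that φ(v₁,…,v_m)² ≤ c₁·Gram_{g₁}(v₁,…,v_m) and φ(v₁,…,v_m)² ≤ c₂·Gram_{g₂}(v₁,…,v_m) for all v₁,…,v_m ∈ ℝ^n. Then for every s ∈ [0,1] and all v₁,…,v_m ∈ ℝ^n, φ(v₁,…,v_m)² ≤ ((1−s)·c₁ + s·c₂)·Gram_{(1−s)g₁+s g₂}(v₁,…,v_m). (In other words, the squared comass of φ with respect to (1−s)g₁+s g₂ is at most (1−s) times its squared comass with respect to g₁ plus s times its squared comass with respect to g₂.) -/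
/-!
If `v` is linearly dependent, both sides vanish. Otherwise the Gram matrices `G₁`, `G₂` of `v`
are positive definite, and the Gram matrix of `(1 - s) g₁ + s g₂` is `(1 - s) G₁ + s G₂`. Then
`φ(v)² = (φ(v)²)^(1-s) (φ(v)²)^s ≤ (c₁ det G₁)^(1-s) (c₂ det G₂)^s`, and the claim follows from
weighted AM-GM, `c₁^(1-s) c₂^s ≤ (1 - s) c₁ + s c₂`, together with the log-concavity of the
determinant on positive definite matrices, `(det G₁)^(1-s) (det G₂)^s ≤ det ((1 - s) G₁ + s G₂)`.
Writing `G₁ = Cᴴ C` reduces the latter to `G₁ = 1`, where it is AM-GM for each eigenvalue of `G₂`.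
-/

/-- The Gram determinant of the vectors `v 0, …, v (m-1)` with respect to a
pairing `g` on `ℝ^n`. -/
noncomputable def gram {n m : ℕ} (g : (Fin n → ℝ) → (Fin n → ℝ) → ℝ)
    (v : Fin m → (Fin n → ℝ)) : ℝ :=
  (Matrix.of fun i j => g (v i) (v j)).det

/-- `g` is an inner product on `ℝ^n`: a symmetric bilinear form which is
positive definite. -/
def IsInnerProduct {n : ℕ} (g : (Fin n → ℝ) → (Fin n → ℝ) → ℝ) : Prop :=
  (∀ x y, g x y = g y x) ∧ (∀ x, IsLinearMap ℝ (g x)) ∧ ∀ v, v ≠ 0 → 0 < g v v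

open scoped Matrix

section DetLogConcave

variable {ι : Type*} [Fintype ι] [DecidableEq ι]

theorem Matrix.IsHermitian.det_cfc {A : Matrix ι ι ℝ} (hA : A.IsHermitian) (f : ℝ → ℝ) :
    (cfc f A).det = ∏ i, f (hA.eigenvalues i) := by
  rw [hA.cfc_eq]
  simp [IsHermitian.cfc, -Unitary.conjStarAlgAut_apply]

theorem Matrix.PosDef.det_rpow_le_det_one_sub_smul_add_smul {A : Matrix ι ι ℝ} (hA : A.PosDef)
    {s : ℝ} (hs0 : 0 ≤ s) (hs1 : s ≤ 1) :
    A.det ^ s ≤ ((1 - s) • 1 + s • A).det := by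
  -- found by the `cfc_tac` side-condition discharger of the `cfc` lemmas below
  have hA' : IsSelfAdjoint A := hA.1
  have hcfc : (1 - s) • (1 : Matrix ι ι ℝ) + s • A = cfc (fun x => (1 - s) + s * x) A := by
    rw [cfc_add A (fun _ => 1 - s) (fun x => s * x), cfc_const (1 - s) A,
      cfc_const_mul s (fun x => x) A, cfc_id' ℝ A, Algebra.algebraMap_eq_smul_one]
  have hpos := hA.eigenvalues_pos
  rw [hcfc, hA.1.det_cfc, hA.1.det_eq_prod_eigenvalues]
  simp only [RCLike.ofReal_real_eq_id, id_eq]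
  rw [← Real.finsetProd_rpow _ _ fun i _ => (hpos i).le]
  refine Finset.prod_le_prod (fun i _ => Real.rpow_nonneg (hpos i).le s) fun i _ => ?_
  simpa using Real.geom_mean_le_arith_mean2_weighted (sub_nonneg.2 hs1) hs0 zero_le_one
    (hpos i).le (by ring)

open scoped MatrixOrder in
theorem Matrix.PosDef.det_rpow_mul_det_rpow_le_det_smul_add_smul {A B : Matrix ι ι ℝ}
    (hA : A.PosDef) (hB : B.PosDef) {s : ℝ} (hs0 : 0 ≤ s) (hs1 : s ≤ 1) :
    A.det ^ (1 - s) * B.det ^ s ≤ ((1 - s) • A + s • B).det := by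
  obtain ⟨C, hC, rfl⟩ :=
    CStarAlgebra.isStrictlyPositive_iff_eq_star_mul_self.mp hA.isStrictlyPositive
  have hCdet : IsUnit C.det := (isUnit_iff_isUnit_det C).mp hC
  have hCinv : C⁻¹ * C = 1 := nonsing_inv_mul C hCdet
  have hCinv' : star C * (C⁻¹)ᴴ = 1 := by
    rw [star_eq_conjTranspose, ← conjTranspose_mul, hCinv, conjTranspose_one]
  set M := (C⁻¹)ᴴ * B * C⁻¹
  have hM : M.PosDef := hB.conjTranspose_mul_mul_same
    (mulVec_injective_iff_isUnit.mpr (isUnit_nonsing_inv_iff.mpr hC))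
  have hdecomp : (1 - s) • (star C * C) + s • B = star C * ((1 - s) • 1 + s • M) * C := by
    simp only [M, Matrix.mul_add, Matrix.add_mul, Matrix.mul_smul, Matrix.smul_mul, mul_one,
      ← Matrix.mul_assoc, hCinv', one_mul]
    simp only [Matrix.mul_assoc, hCinv, mul_one]
  have hstar (X : Matrix ι ι ℝ) : (star X).det = X.det := by
    rw [star_eq_conjTranspose, det_conjTranspose, star_trivial]
  have hMdet : M.det = B.det / (star C * C).det := by
    rw [det_mul, det_mul, det_mul, ← star_eq_conjTranspose, hstar, hstar, det_nonsing_inv,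
      Ring.inverse_eq_inv']
    field_simp [hCdet.ne_zero]
  have hApos : 0 < (star C * C).det := hA.det_pos
  calc (star C * C).det ^ (1 - s) * B.det ^ s = (star C * C).det * M.det ^ s := by
        rw [hMdet, Real.div_rpow hB.det_pos.le hApos.le, Real.rpow_sub hApos, Real.rpow_one]
        field_simp
    _ ≤ (star C * C).det * ((1 - s) • 1 + s • M).det :=
        mul_le_mul_of_nonneg_left (hM.det_rpow_le_det_one_sub_smul_add_smul hs0 hs1) hApos.le
    _ = ((1 - s) • (star C * C) + s • B).det := by
        rw [hdecomp, det_mul, det_mul, det_mul]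
        ring

end DetLogConcave

theorem le_arith_mean_mul_geom_mean_of_le_mul {p a b x y s : ℝ} (hp : 0 ≤ p) (ha : 0 ≤ a)
    (hb : 0 ≤ b) (hx : 0 ≤ x) (hy : 0 ≤ y) (hax : p ≤ a * x) (hby : p ≤ b * y)
    (hs0 : 0 ≤ s) (hs1 : s ≤ 1) :
    p ≤ ((1 - s) * a + s * b) * (x ^ (1 - s) * y ^ s) :=
  calc p = p ^ (1 - s) * p ^ s := by
        rw [← Real.rpow_add' hp (by norm_num), sub_add_cancel, Real.rpow_one]
    _ ≤ (a * x) ^ (1 - s) * (b * y) ^ s := by gcongr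
    _ = (a ^ (1 - s) * b ^ s) * (x ^ (1 - s) * y ^ s) := by
        rw [Real.mul_rpow ha hx, Real.mul_rpow hb hy]; ring
    _ ≤ ((1 - s) * a + s * b) * (x ^ (1 - s) * y ^ s) := by
        gcongr
        exact Real.geom_mean_le_arith_mean2_weighted (by linarith) hs0 ha hb (by ring)

theorem IsLinearMap.map_sum_smul {E ι : Type*} [AddCommGroup E] [Module ℝ E] [Fintype ι]
    {f : E → ℝ} (hf : IsLinearMap ℝ f) (c : ι → ℝ) (v : ι → E) :
    f (∑ i, c i • v i) = ∑ i, c i * f (v i) := by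
  have h := map_sum hf.mk' (fun i => c i • v i) Finset.univ
  simp only [IsLinearMap.mk'_apply, hf.map_smul, smul_eq_mul] at h
  exact h

def gramMatrix {E ι : Type*} (g : E → E → ℝ) (v : ι → E) : Matrix ι ι ℝ :=
  Matrix.of fun i j => g (v i) (v j)

theorem gramMatrix_mul_add_mul {E ι : Type*} (g₁ g₂ : E → E → ℝ) (a b : ℝ) (v : ι → E) :
    gramMatrix (fun x y => a * g₁ x y + b * g₂ x y) v = a • gramMatrix g₁ v + b • gramMatrix g₂ v :=
  rfl

section GramMatrix

variable {E ι : Type*} [AddCommGroup E] [Module ℝ E] [Fintype ι] {g : E → E → ℝ}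

theorem gramMatrix_mulVec (hg : ∀ x, IsLinearMap ℝ (g x)) (v : ι → E) (c : ι → ℝ) :
    gramMatrix g v *ᵥ c = fun i => g (v i) (∑ j, c j • v j) := by
  ext i
  simp [gramMatrix, Matrix.mulVec, dotProduct, (hg (v i)).map_sum_smul, mul_comm]

theorem star_dotProduct_gramMatrix_mulVec (hsymm : ∀ x y, g x y = g y x)
    (hg : ∀ x, IsLinearMap ℝ (g x)) (v : ι → E) (c : ι → ℝ) :
    star c ⬝ᵥ (gramMatrix g v *ᵥ c) = g (∑ i, c i • v i) (∑ i, c i • v i) := by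
  rw [gramMatrix_mulVec hg, (hg _).map_sum_smul]
  simp only [dotProduct, star_trivial]
  exact Finset.sum_congr rfl fun i _ => by rw [hsymm]

theorem det_gramMatrix_eq_zero [DecidableEq ι] (hg : ∀ x, IsLinearMap ℝ (g x)) {v : ι → E}
    (hv : ¬LinearIndependent ℝ v) : (gramMatrix g v).det = 0 := by
  obtain ⟨c, hc, i, hi⟩ := Fintype.not_linearIndependent_iff.mp hv
  refine Matrix.exists_mulVec_eq_zero_iff.mp ⟨c, fun h => hi (congrFun h i), ?_⟩
  rw [gramMatrix_mulVec hg, hc]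
  ext i
  exact (hg (v i)).map_zero

end GramMatrix

theorem IsInnerProduct.posDef_gramMatrix {n : ℕ} {ι : Type*} [Fintype ι]
    {g : (Fin n → ℝ) → (Fin n → ℝ) → ℝ} (hg : IsInnerProduct g) {v : ι → Fin n → ℝ}
    (hv : LinearIndependent ℝ v) : (gramMatrix g v).PosDef := by
  obtain ⟨hsymm, hlin, hpos⟩ := hg
  refine .of_dotProduct_mulVec_pos (Matrix.IsHermitian.ext fun i j => hsymm _ _) fun c hc => ?_
  rw [star_dotProduct_gramMatrix_mulVec hsymm hlin]
  exact hpos _ fun h => hc (funext (Fintype.linearIndependent_iff.mp hv c h))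

theorem stmt1_general {n m : ℕ} (φ : (Fin n → ℝ) [⋀^Fin m]→ₗ[ℝ] ℝ)
    (g₁ g₂ : (Fin n → ℝ) → (Fin n → ℝ) → ℝ)
    (hg₁ : IsInnerProduct g₁) (hg₂ : IsInnerProduct g₂)
    (c₁ c₂ : ℝ)
    (hc₁ : ∀ v : Fin m → (Fin n → ℝ), (φ v) ^ 2 ≤ c₁ * gram g₁ v)
    (hc₂ : ∀ v : Fin m → (Fin n → ℝ), (φ v) ^ 2 ≤ c₂ * gram g₂ v)
    (s : ℝ) (hs : s ∈ Set.Icc (0 : ℝ) 1) :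
    ∀ v : Fin m → (Fin n → ℝ),
      (φ v) ^ 2 ≤ ((1 - s) * c₁ + s * c₂) *
        gram (fun x y => (1 - s) * g₁ x y + s * g₂ x y) v := by
  obtain ⟨hs0, hs1⟩ := hs
  intro v
  by_cases hv : LinearIndependent ℝ v
  · have hG₁ := hg₁.posDef_gramMatrix hv
    have hG₂ := hg₂.posDef_gramMatrix hv
    have hc₁0 : 0 ≤ c₁ := nonneg_of_mul_nonneg_left ((sq_nonneg _).trans (hc₁ v)) hG₁.det_pos
    have hc₂0 : 0 ≤ c₂ := nonneg_of_mul_nonneg_left ((sq_nonneg _).trans (hc₂ v)) hG₂.det_pos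
    calc φ v ^ 2 ≤ ((1 - s) * c₁ + s * c₂) * (gram g₁ v ^ (1 - s) * gram g₂ v ^ s) :=
          le_arith_mean_mul_geom_mean_of_le_mul (sq_nonneg _) hc₁0 hc₂0 hG₁.det_pos.le
            hG₂.det_pos.le (hc₁ v) (hc₂ v) hs0 hs1
      _ ≤ ((1 - s) * c₁ + s * c₂) * ((1 - s) • gramMatrix g₁ v + s • gramMatrix g₂ v).det := by
          have : 0 ≤ 1 - s := sub_nonneg.2 hs1
          gcongr
          exact hG₁.det_rpow_mul_det_rpow_le_det_smul_add_smul hG₂ hs0 hs1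
      _ = _ := by rw [← gramMatrix_mul_add_mul]; rfl
  · have hlin (x : Fin n → ℝ) : IsLinearMap ℝ fun y => (1 - s) * g₁ x y + s * g₂ x y :=
      ((1 - s) • (hg₁.2.1 x).mk' + s • (hg₂.2.1 x).mk').isLinear
    have hgram : gram (fun x y => (1 - s) * g₁ x y + s * g₂ x y) v = 0 :=
      det_gramMatrix_eq_zero hlin hv
    rw [φ.map_linearDependent v hv, hgram]
    simp

/-- If the squared comass of an alternating `m`-form `φ` with respect to inner
products `g₁`, `g₂` is at most `c₁`, `c₂` respectively, then its squared comass
with respect to `(1-s)g₁ + s g₂` is at most `(1-s)c₁ + s c₂` for `s ∈ [0,1]`. -/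
theorem stmt1 {n m : ℕ} (φ : (Fin n → ℝ) [⋀^Fin m]→ₗ[ℝ] ℝ)
    (g₁ g₂ : (Fin n → ℝ) → (Fin n → ℝ) → ℝ)
    (hg₁ : IsInnerProduct g₁) (hg₂ : IsInnerProduct g₂)
    (c₁ c₂ : ℝ) (hc₁0 : 0 ≤ c₁) (hc₂0 : 0 ≤ c₂)
    (hc₁ : ∀ v : Fin m → (Fin n → ℝ), (φ v) ^ 2 ≤ c₁ * gram g₁ v)
    (hc₂ : ∀ v : Fin m → (Fin n → ℝ), (φ v) ^ 2 ≤ c₂ * gram g₂ v)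
    (s : ℝ) (hs : s ∈ Set.Icc (0 : ℝ) 1) :
    ∀ v : Fin m → (Fin n → ℝ),
      (φ v) ^ 2 ≤ ((1 - s) * c₁ + s * c₂) *
        gram (fun x y => (1 - s) * g₁ x y + s * g₂ x y) v :=
  stmt1_general φ g₁ g₂ hg₁ hg₂ c₁ c₂ hc₁ hc₂ s hs
end

section
/- Equip ℝ^n with its standard inner product ⟨·,·⟩ and let v₁,…,v_n be an orthonormal basis of ℝ^n. Let 1 ≤ m ≤ n and let φ be an alternating m-form on ℝ^n that has comass at most 1 with respect to ⟨·,·⟩ and satisfies φ(v₁,…,v_m) = 1. Then for every vector x ∈ ℝ^n, φ(v₁,…,v_{m−1}, x) = ⟨x, v_m⟩. -/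
/-- The standard inner product on `ℝ^n`. -/
def stdInner {n : ℕ} (x y : Fin n → ℝ) : ℝ := ∑ i, x i * y i

/-- The Gram determinant of `v 0, …, v (m-1)` with respect to the standard
inner product on `ℝ^n`. -/
noncomputable def gramStd {n m : ℕ} (v : Fin m → (Fin n → ℝ)) : ℝ :=
  (Matrix.of fun i j => stdInner (v i) (v j)).det

/-!
Both sides are linear in `x`, so it suffices to compare them on the orthonormal basis `v`. On
`v₁, …, v_m` this is the alternating property together with `φ(v₁, …, v_m) = 1`. For a basis vector
`y` orthogonal to `v₁, …, v_m`, let `a = φ(v₁, …, v_{m-1}, y)`: replacing `v_m` by `v_m + a y`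
raises the value of `φ` to `1 + a²` and the Gram determinant to `1 + a²` as well, so comass at
most `1` gives `(1 + a²)² ≤ 1 + a²`, i.e. `a = 0`.
-/

open Function Matrix

theorem stdInner_eq_dotProduct {n : ℕ} (x y : Fin n → ℝ) : stdInner x y = x ⬝ᵥ y := rfl

theorem gramStd_eq_prod_of_pairwise_orthogonal {n m : ℕ} {u : Fin m → Fin n → ℝ}
    (hu : Pairwise fun i j => stdInner (u i) (u j) = 0) :
    gramStd u = ∏ i, stdInner (u i) (u i) := by
  have hdiag : (Matrix.of fun i j => stdInner (u i) (u j)) =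
      diagonal fun i => stdInner (u i) (u i) := by
    ext i j
    rcases eq_or_ne i j with rfl | hij
    · simp
    · simp [hu hij, hij]
  rw [gramStd, hdiag, det_diagonal]

theorem linearIndependent_of_stdInner_eq_ite {ι : Type*} [Fintype ι] [DecidableEq ι] {n : ℕ}
    {v : ι → Fin n → ℝ} (hv : ∀ i j, stdInner (v i) (v j) = if i = j then 1 else 0) :
    LinearIndependent ℝ v := by
  simp only [stdInner_eq_dotProduct] at hv
  rw [Fintype.linearIndependent_iff]
  intro c hc j
  calc c j = (∑ i, c i • v i) ⬝ᵥ v j := by simp [sum_dotProduct, hv]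
    _ = 0 := by simp [hc]

section Comass

variable {n m : ℕ} {e : Fin m → Fin n → ℝ}

theorem gramStd_update_add_of_orthogonal
    (he : ∀ i j, stdInner (e i) (e j) = if i = j then 1 else 0) (k : Fin m) {y : Fin n → ℝ}
    (hy : ∀ i, stdInner (e i) y = 0) :
    gramStd (update e k (e k + y)) = 1 + stdInner y y := by
  simp only [stdInner_eq_dotProduct] at he hy ⊢
  have hy' : ∀ i, y ⬝ᵥ e i = 0 := fun i => by rw [dotProduct_comm, hy]
  have hu : Pairwise fun i j =>
      stdInner (update e k (e k + y) i) (update e k (e k + y) j) = 0 := by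
    intro i j hij
    simp only [stdInner_eq_dotProduct, update_apply]
    split_ifs <;> simp_all [add_dotProduct, dotProduct_add]
  have hdiag : ∀ i, stdInner (update e k (e k + y) i) (update e k (e k + y) i) =
      update (fun _ => (1 : ℝ)) k (1 + y ⬝ᵥ y) i := by
    intro i
    simp only [stdInner_eq_dotProduct, update_apply]
    split_ifs <;> simp_all [add_dotProduct, dotProduct_add]
  rw [gramStd_eq_prod_of_pairwise_orthogonal hu, Finset.prod_congr rfl fun i _ => hdiag i,
    Finset.prod_update_of_mem (Finset.mem_univ k)]
  simp

variable {φ : (Fin n → ℝ) [⋀^Fin m]→ₗ[ℝ] ℝ}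

theorem map_update_eq_zero_of_comass_le_one (hcomass : ∀ u, φ u ^ 2 ≤ gramStd u)
    (he : ∀ i j, stdInner (e i) (e j) = if i = j then 1 else 0) (hφ : φ e = 1) (k : Fin m)
    {y : Fin n → ℝ} (hy : ∀ i, stdInner (e i) y = 0) (hyy : stdInner y y = 1) :
    φ (update e k y) = 0 := by
  set a := φ (update e k y)
  have hgram : gramStd (update e k (e k + a • y)) = 1 + a ^ 2 := by
    simp only [stdInner_eq_dotProduct] at hy hyy
    rw [gramStd_update_add_of_orthogonal he k fun i => ?_]
    · simp [stdInner_eq_dotProduct, hyy, sq]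
    · simp [stdInner_eq_dotProduct, hy]
  have hval : φ (update e k (e k + a • y)) = 1 + a ^ 2 := by
    rw [φ.map_update_add, φ.map_update_smul, update_eq_self, hφ, smul_eq_mul, sq]
  have h := hcomass (update e k (e k + a • y))
  rw [hgram, hval] at h
  nlinarith [sq_nonneg a]

theorem map_update_eq_stdInner_of_comass_le_one (hcomass : ∀ u, φ u ^ 2 ≤ gramStd u)
    {v : Fin n → Fin n → ℝ} (hv : ∀ i j, stdInner (v i) (v j) = if i = j then 1 else 0)
    {s : Fin m → Fin n} (hs : Injective s) (hφ : φ (v ∘ s) = 1) (k : Fin m) (x : Fin n → ℝ) :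
    φ (update (v ∘ s) k x) = stdInner x (v (s k)) := by
  have he : ∀ i j, stdInner ((v ∘ s) i) ((v ∘ s) j) = if i = j then 1 else 0 := by
    simp [hv, hs.eq_iff]
  have hspan := (linearIndependent_of_stdInner_eq_ite hv).span_eq_top_of_card_eq_finrank'
    (by simp)
  suffices h : φ.toMultilinearMap.toLinearMap (v ∘ s) k =
      (dotProductBilin ℝ ℝ).flip (v (s k)) from LinearMap.congr_fun h x
  refine LinearMap.ext_on_range hspan fun j => ?_
  simp only [MultilinearMap.toLinearMap_apply, AlternatingMap.coe_multilinearMap,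
    LinearMap.flip_apply, dotProductBilin_apply_apply, ← stdInner_eq_dotProduct]
  by_cases hj : j ∈ Set.range s
  · obtain ⟨i, rfl⟩ := hj
    change φ (update (v ∘ s) k ((v ∘ s) i)) = stdInner ((v ∘ s) i) ((v ∘ s) k)
    rw [he]
    rcases eq_or_ne i k with rfl | hik
    · rw [update_eq_self, hφ, if_pos rfl]
    · rw [φ.map_update_self _ hik.symm, if_neg hik]
  · have hy : ∀ i, stdInner ((v ∘ s) i) (v j) = 0 := fun i => by
      rw [Function.comp_apply, hv, if_neg fun h => hj ⟨i, h⟩]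
    rw [map_update_eq_zero_of_comass_le_one hcomass he hφ k hy (by simp [hv]), hv,
      if_neg fun h => hj ⟨k, h.symm⟩]

end Comass

/-- If `v₁,…,v_n` is an orthonormal basis of `ℝ^n` and `φ` is an alternating
`m`-form of comass at most `1` (for the standard inner product) with
`φ(v₁,…,v_m) = 1`, then `φ(v₁,…,v_{m-1}, x) = ⟨x, v_m⟩` for every `x ∈ ℝ^n`. -/
theorem stmt7 {n m : ℕ} (hm : 1 ≤ m) (hmn : m ≤ n)
    (v : Fin n → (Fin n → ℝ))
    (hortho : ∀ i j : Fin n, stdInner (v i) (v j) = if i = j then 1 else 0)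
    (φ : (Fin n → ℝ) [⋀^Fin m]→ₗ[ℝ] ℝ)
    (hcomass : ∀ u : Fin m → (Fin n → ℝ), (φ u) ^ 2 ≤ gramStd u)
    (hcal : φ (fun i : Fin m => v (Fin.castLE hmn i)) = 1) :
    ∀ x : Fin n → ℝ,
      φ (Function.update (fun i : Fin m => v (Fin.castLE hmn i)) ⟨m - 1, by omega⟩ x) =
        stdInner x (v (Fin.castLE hmn ⟨m - 1, by omega⟩)) :=
  map_update_eq_stdInner_of_comass_le_one hcomass hortho (Fin.castLE_injective hmn) hcal _
end
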